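/- Let α, β > 0, γ > 0, p ∈ (0,1], and u ∈ (0,1). Define C = (-(1/p)·[1 + p·W_{-1}((u-1)/(p·e^{1/p}))])^{1/γ} and Q(u) = (-α + √(α² + 2βC))/β. Then Q(u) > 0 and F(Q(u)) = u, where F is the RTGLE distribution function F(x) = 1 - [1 + p(αx+βx²/2)^γ]·e^{-(αx+βx²/2)^γ}. -/

import Mathlib

/-!
Put `v = (u - 1) / (p e^{1/p})` and `w = W₋₁(v)`. Since `p e^{1/p} ≥ e`, `v` lies in
`[-1/e, 0)`, and since `t ↦ t e^t` is strictly decreasing on `(-∞, -1]` and takes the value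
`-1/(p e^{1/p}) < v` at `-1/p`, we get `w < -1/p`. Hence `T = -(1 + p w)/p > 0`, so
`C = T^{1/γ} > 0` and `Q` is the positive root of `α Q + β Q²/2 = C`. Then `F(Q) = 1 - (1 + p T) e^{-T}`,
and `(1 + p T) e^{-T} = -p w e^w e^{1/p} = 1 - u` by the defining equation of `w`.
-/

open Real Set

lemma exp_one_le_mul_exp_one_div {p : ℝ} (hp : 0 < p) : exp 1 ≤ p * exp (1 / p) := by
  have hlog : 1 - 1 / p ≤ log p := by simpa [one_div] using one_sub_inv_le_log_of_pos hp
  calc exp 1 ≤ exp (log p + 1 / p) := exp_le_exp.2 (by linarith)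
    _ = p * exp (1 / p) := by rw [exp_add, exp_log hp]

lemma strictAntiOn_mul_exp : StrictAntiOn (fun t : ℝ => t * exp t) (Iic (-1)) := by
  refine strictAntiOn_of_deriv_neg (convex_Iic _) (by fun_prop) fun t ht => ?_
  rw [interior_Iic, mem_Iio] at ht
  have hderiv : deriv (fun t : ℝ => t * exp t) t = (t + 1) * exp t := by
    rw [((hasDerivAt_id' t).fun_mul (hasDerivAt_exp t)).deriv]
    ring
  rw [hderiv]
  exact mul_neg_of_neg_of_pos (by linarith) (exp_pos t)

lemma lt_of_mul_exp_lt_mul_exp {a w : ℝ} (hw : w ≤ -1) (h : a * exp a < w * exp w) : w < a := by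
  by_contra! haw
  exact (strictAntiOn_mul_exp.antitoneOn (haw.trans hw) hw haw).not_gt h

lemma quadratic_root_pos {α β C : ℝ} (hβ : 0 < β) (hC : 0 < C) :
    0 < (-α + √(α ^ 2 + 2 * β * C)) / β := by
  have hsq : α ^ 2 < √(α ^ 2 + 2 * β * C) ^ 2 := by
    rw [sq_sqrt (by positivity)]
    linarith [mul_pos hβ hC]
  have hlt : α < √(α ^ 2 + 2 * β * C) := (abs_lt_of_sq_lt_sq' hsq (sqrt_nonneg _)).2
  exact div_pos (by linarith) hβ

lemma quadratic_root_eq {α β C : ℝ} (hβ : β ≠ 0) (hC : 0 ≤ α ^ 2 + 2 * β * C) :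
    α * ((-α + √(α ^ 2 + 2 * β * C)) / β) + β * ((-α + √(α ^ 2 + 2 * β * C)) / β) ^ 2 / 2 = C := by
  field_simp
  linear_combination sq_sqrt hC

lemma one_sub_one_add_mul_mul_exp_neg_eq {p u w : ℝ} (hp : p ≠ 0)
    (hw : w * exp w = (u - 1) / (p * exp (1 / p))) :
    1 - (1 + p * (-(1 / p) * (1 + p * w))) * exp (-(-(1 / p) * (1 + p * w))) = u := by
  have hlin : -(-(1 / p) * (1 + p * w)) = 1 / p + w := by field_simp
  have hone : 1 + p * (-(1 / p) * (1 + p * w)) = -(p * w) := by field_simp; ring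
  rw [hlin, hone, exp_add]
  rw [eq_div_iff (by positivity)] at hw
  linear_combination hw

theorem rtgle_quantile (α β γ p u : ℝ) (W : ℝ → ℝ)
    (hβ : 0 < β) (hγ : 0 < γ) (hp0 : 0 < p)
    (hu0 : 0 < u) (hu1 : u < 1)
    (hW : ∀ v : ℝ, -(1 / Real.exp 1) ≤ v → v < 0 →
      W v * Real.exp (W v) = v ∧ W v ≤ -1) :
    let C : ℝ := (-(1 / p) * (1 + p * W ((u - 1) / (p * Real.exp (1 / p))))) ^ (1 / γ)
    let Q : ℝ := (-α + Real.sqrt (α ^ 2 + 2 * β * C)) / β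
    0 < Q ∧
    1 - (1 + p * (α * Q + β * Q ^ 2 / 2) ^ γ) *
        Real.exp (-(α * Q + β * Q ^ 2 / 2) ^ γ) = u := by
  intro C Q
  set v := (u - 1) / (p * exp (1 / p))
  have hpe : 0 < p * exp (1 / p) := by positivity
  have hv_lt : v < 0 := div_neg_of_neg_of_pos (by linarith) hpe
  have hv_gt : -1 / (p * exp (1 / p)) < v := div_lt_div_of_pos_right (by linarith) hpe
  have hv_ge : -(1 / exp 1) ≤ v := by
    refine le_trans ?_ hv_gt.le
    rw [neg_div, neg_le_neg_iff]
    exact one_div_le_one_div_of_le (exp_pos 1) (exp_one_le_mul_exp_one_div hp0)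
  obtain ⟨hwv, hw1⟩ := hW v hv_ge hv_lt
  have hw : W v < -(1 / p) := by
    refine lt_of_mul_exp_lt_mul_exp hw1 ?_
    rw [hwv]
    convert hv_gt using 1
    rw [exp_neg]
    field_simp
  have hT : 0 < -(1 / p) * (1 + p * W v) := by
    have : -(1 / p) * (1 + p * W v) = -(1 / p) - W v := by field_simp; ring
    linarith
  have hC : 0 < C := rpow_pos_of_pos hT _
  have hQC : α * Q + β * Q ^ 2 / 2 = C := quadratic_root_eq hβ.ne' (by positivity)
  refine ⟨quadratic_root_pos hβ hC, ?_⟩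
  rw [hQC, ← rpow_mul hT.le, one_div_mul_cancel hγ.ne', rpow_one]
  exact one_sub_one_add_mul_mul_exp_neg_eq hp0.ne' hwv
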